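/- arXiv:1802.03976 — 2 statements merged into one kernel-verified Lean document; each statement's English description precedes it below -/
import Mathlib

section
/- If u ∈ ℝ^n, v ∈ ℝ^m are such that the matrix κ defined by κ_{ij} = exp((u_i + v_j − C_{ij})/ρ) μ_i ν_j is a coupling of μ and ν (i.e., its marginals are μ and ν), then κ is the unique minimizer of κ ↦ ⟨κ, C⟩ + ρ KL(κ ‖ μ⊗ν) over K(μ,ν), and the minimum value equals ⟨u,μ⟩ + ⟨v,ν⟩. -/
def IsCoupling {n m : ℕ} (κ : Fin n → Fin m → ℝ) (μ : Fin n → ℝ) (ν : Fin m → ℝ) : Prop :=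
  (∀ i j, 0 ≤ κ i j) ∧ (∀ i, ∑ j, κ i j = μ i) ∧ (∀ j, ∑ i, κ i j = ν j)

/-!
For any coupling `γ`, the marginal constraints turn `∑ γ_ij (u_i + v_j)` into the dual value
`⟨u,μ⟩ + ⟨v,ν⟩`, and `log (κ_ij / (μ_i ν_j)) = (u_i + v_j - C_ij) / ρ`; together these give
`cost γ = ⟨u,μ⟩ + ⟨v,ν⟩ + ρ KL(γ ‖ κ)`. As `γ` and `κ` have the same total mass,
`KL(γ ‖ κ) = ∑ κ_ij f(γ_ij / κ_ij)` with `f(x) = x log x + 1 - x ≥ 0`, vanishing only at `x = 1`.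
-/

open Real Finset InformationTheory

lemma mul_klFun_div (p : ℝ) {q : ℝ} (hq : q ≠ 0) :
    q * klFun (p / q) = p * log (p / q) + q - p := by
  rw [klFun_apply]
  field_simp

section Gibbs

variable {ι : Type*} [Fintype ι] {p q : ι → ℝ}

lemma sum_mul_log_div_eq_sum_mul_klFun (hq : ∀ i, q i ≠ 0) (hpq : ∑ i, p i = ∑ i, q i) :
    ∑ i, p i * log (p i / q i) = ∑ i, q i * klFun (p i / q i) := by
  simp only [mul_klFun_div _ (hq _), sum_sub_distrib, sum_add_distrib, hpq, add_sub_cancel_right]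

lemma sum_mul_log_div_nonneg (hp : ∀ i, 0 ≤ p i) (hq : ∀ i, 0 < q i)
    (hpq : ∑ i, p i = ∑ i, q i) : 0 ≤ ∑ i, p i * log (p i / q i) := by
  rw [sum_mul_log_div_eq_sum_mul_klFun (fun i => (hq i).ne') hpq]
  exact sum_nonneg fun i _ => mul_nonneg (hq i).le (klFun_nonneg (div_nonneg (hp i) (hq i).le))

lemma eq_of_sum_mul_log_div_eq_zero (hp : ∀ i, 0 ≤ p i) (hq : ∀ i, 0 < q i)
    (hpq : ∑ i, p i = ∑ i, q i) (h : ∑ i, p i * log (p i / q i) = 0) : p = q := by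
  have hpq_nonneg (i : ι) : 0 ≤ p i / q i := div_nonneg (hp i) (hq i).le
  rw [sum_mul_log_div_eq_sum_mul_klFun (fun i => (hq i).ne') hpq,
    sum_eq_zero_iff_of_nonneg fun i _ => mul_nonneg (hq i).le (klFun_nonneg (hpq_nonneg i))] at h
  funext i
  have hkl : klFun (p i / q i) = 0 := (mul_eq_zero.1 (h i (mem_univ i))).resolve_left (hq i).ne'
  exact (div_eq_one_iff_eq (hq i).ne').1 ((klFun_eq_zero_iff (hpq_nonneg i)).1 hkl)

end Gibbs

lemma mul_log_div_eq_add (x : ℝ) {y z : ℝ} (hy : y ≠ 0) (hz : z ≠ 0) :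
    x * log (x / z) = x * log (x / y) + x * log (y / z) := by
  rcases eq_or_ne x 0 with rfl | hx
  · simp
  · rw [← mul_add, ← log_mul (div_ne_zero hx hy) (div_ne_zero hy hz), div_mul_div_cancel₀ hy]

section EntropicTransport

variable {α β : Type*} (μ : α → ℝ) (ν : β → ℝ) (C : α → β → ℝ) (ρ : ℝ) (u : α → ℝ) (v : β → ℝ)

noncomputable def entropicCost [Fintype α] [Fintype β] (γ : α → β → ℝ) : ℝ :=
  (∑ i, ∑ j, γ i j * C i j) + ρ * ∑ i, ∑ j, γ i j * log (γ i j / (μ i * ν j))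

noncomputable def gibbsKernel (i : α) (j : β) : ℝ :=
  exp ((u i + v j - C i j) / ρ) * (μ i * ν j)

variable {μ ν C ρ u v}

lemma gibbsKernel_pos (hμ : ∀ i, 0 < μ i) (hν : ∀ j, 0 < ν j) (i : α) (j : β) :
    0 < gibbsKernel μ ν C ρ u v i j :=
  mul_pos (exp_pos _) (mul_pos (hμ i) (hν j))

lemma gibbsKernel_ne_zero {i : α} {j : β} (hμν : μ i * ν j ≠ 0) : gibbsKernel μ ν C ρ u v i j ≠ 0 :=
  mul_ne_zero (exp_pos _).ne' hμν

lemma log_gibbsKernel_div {i : α} {j : β} (hμν : μ i * ν j ≠ 0) :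
    log (gibbsKernel μ ν C ρ u v i j / (μ i * ν j)) = (u i + v j - C i j) / ρ := by
  rw [gibbsKernel, mul_div_assoc, div_self hμν, mul_one, log_exp]

lemma sum_sum_mul_add_eq_of_marginals [Fintype α] [Fintype β] {γ : α → β → ℝ}
    (hrow : ∀ i, ∑ j, γ i j = μ i) (hcol : ∀ j, ∑ i, γ i j = ν j) :
    ∑ i, ∑ j, γ i j * (u i + v j) = ∑ i, u i * μ i + ∑ j, v j * ν j := by
  simp only [mul_add, sum_add_distrib]
  congr 1
  · exact sum_congr rfl fun i _ => by rw [← sum_mul, hrow, mul_comm]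
  · rw [sum_comm]
    exact sum_congr rfl fun j _ => by rw [← sum_mul, hcol, mul_comm]

lemma entropicCost_eq_dual_add [Fintype α] [Fintype β] (hρ : ρ ≠ 0) (hμ : ∀ i, μ i ≠ 0)
    (hν : ∀ j, ν j ≠ 0) {γ : α → β → ℝ} (hrow : ∀ i, ∑ j, γ i j = μ i)
    (hcol : ∀ j, ∑ i, γ i j = ν j) :
    entropicCost μ ν C ρ γ = ∑ i, u i * μ i + ∑ j, v j * ν j +
      ρ * ∑ i, ∑ j, γ i j * log (γ i j / gibbsKernel μ ν C ρ u v i j) := by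
  have hpoint (i : α) (j : β) : γ i j * log (γ i j / (μ i * ν j)) =
      γ i j * log (γ i j / gibbsKernel μ ν C ρ u v i j) +
        (γ i j * (u i + v j) - γ i j * C i j) / ρ := by
    have hμν : μ i * ν j ≠ 0 := mul_ne_zero (hμ i) (hν j)
    have hK : gibbsKernel μ ν C ρ u v i j ≠ 0 := gibbsKernel_ne_zero hμν
    rw [mul_log_div_eq_add _ hK hμν, log_gibbsKernel_div hμν]
    ring
  simp only [entropicCost, hpoint, sum_add_distrib, ← sum_div, sum_sub_distrib,
    sum_sum_mul_add_eq_of_marginals hrow hcol]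
  field_simp
  ring

lemma sum_sum_mul_log_div_nonneg [Fintype α] [Fintype β] {γ K : α → β → ℝ}
    (hγ : ∀ i j, 0 ≤ γ i j) (hK : ∀ i j, 0 < K i j)
    (hmass : ∑ i, ∑ j, γ i j = ∑ i, ∑ j, K i j) :
    0 ≤ ∑ i, ∑ j, γ i j * log (γ i j / K i j) := by
  simp only [← Fintype.sum_prod_type'] at hmass ⊢
  exact sum_mul_log_div_nonneg (fun x => hγ x.1 x.2) (fun x => hK x.1 x.2) hmass

lemma eq_of_sum_sum_mul_log_div_eq_zero [Fintype α] [Fintype β] {γ K : α → β → ℝ}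
    (hγ : ∀ i j, 0 ≤ γ i j) (hK : ∀ i j, 0 < K i j)
    (hmass : ∑ i, ∑ j, γ i j = ∑ i, ∑ j, K i j)
    (h : ∑ i, ∑ j, γ i j * log (γ i j / K i j) = 0) : γ = K := by
  simp only [← Fintype.sum_prod_type'] at hmass h
  exact Function.uncurry_injective <| eq_of_sum_mul_log_div_eq_zero (p := Function.uncurry γ)
    (q := Function.uncurry K) (fun x => hγ x.1 x.2) (fun x => hK x.1 x.2) hmass h

end EntropicTransport

theorem dual_optimal_coupling_general {n m : ℕ}
    (μ : Fin n → ℝ) (ν : Fin m → ℝ)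
    (hμ0 : ∀ i, 0 < μ i)
    (hν0 : ∀ j, 0 < ν j)
    (C : Fin n → Fin m → ℝ) (ρ : ℝ) (hρ : 0 < ρ)
    (u : Fin n → ℝ) (v : Fin m → ℝ)
    (κ : Fin n → Fin m → ℝ)
    (hκdef : ∀ i j, κ i j = Real.exp ((u i + v j - C i j) / ρ) * (μ i * ν j))
    (hκ : IsCoupling κ μ ν)
    (obj : (Fin n → Fin m → ℝ) → ℝ)
    (hobj : obj = fun κ' =>
      (∑ i, ∑ j, κ' i j * C i j) + ρ * ∑ i, ∑ j, κ' i j * Real.log (κ' i j / (μ i * ν j))) :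
    (∀ κ', IsCoupling κ' μ ν → obj κ ≤ obj κ') ∧
    (∀ κ', IsCoupling κ' μ ν → obj κ' = obj κ → κ' = κ) ∧
    obj κ = (∑ i, u i * μ i) + (∑ j, v j * ν j) := by
  obtain rfl : κ = gibbsKernel μ ν C ρ u v := funext fun i => funext (hκdef i)
  obtain rfl : obj = entropicCost μ ν C ρ := hobj
  set K := gibbsKernel μ ν C ρ u v
  have hK (i j) : 0 < K i j := gibbsKernel_pos hμ0 hν0 i j
  have hcost {γ} (hγ : IsCoupling γ μ ν) : entropicCost μ ν C ρ γ =
      ∑ i, u i * μ i + ∑ j, v j * ν j + ρ * ∑ i, ∑ j, γ i j * log (γ i j / K i j) :=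
    entropicCost_eq_dual_add hρ.ne' (fun i => (hμ0 i).ne') (fun j => (hν0 j).ne') hγ.2.1 hγ.2.2
  have hmass {γ} (hγ : IsCoupling γ μ ν) : ∑ i, ∑ j, γ i j = ∑ i, ∑ j, K i j := by
    simp only [hγ.2.1, hκ.2.1]
  have hvalue : entropicCost μ ν C ρ K = ∑ i, u i * μ i + ∑ j, v j * ν j := by
    simp [hcost hκ, div_self (hK _ _).ne']
  refine ⟨fun γ hγ => ?_, fun γ hγ heq => ?_, hvalue⟩
  · rw [hvalue, hcost hγ]
    exact le_add_of_nonneg_right <|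
      mul_nonneg hρ.le (sum_sum_mul_log_div_nonneg hγ.1 hK (hmass hγ))
  · rw [hvalue, hcost hγ] at heq
    refine eq_of_sum_sum_mul_log_div_eq_zero hγ.1 hK (hmass hγ) ?_
    simpa [hρ.ne'] using heq

/-- If `κ_ij = exp((u_i+v_j−C_ij)/ρ) μ_i ν_j` is a coupling of `μ` and `ν`, then it is
the unique minimizer of `κ ↦ ⟨κ,C⟩ + ρ KL(κ‖μ⊗ν)` over couplings (here
`KL(κ‖μ⊗ν) = Σ κ_ij log(κ_ij/(μ_i ν_j))`), and the minimum value is `⟨u,μ⟩+⟨v,ν⟩`. -/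
theorem dual_optimal_coupling {n m : ℕ}
    (μ : Fin n → ℝ) (ν : Fin m → ℝ)
    (hμ0 : ∀ i, 0 < μ i) (hμ1 : ∑ i, μ i = 1)
    (hν0 : ∀ j, 0 < ν j) (hν1 : ∑ j, ν j = 1)
    (C : Fin n → Fin m → ℝ) (ρ : ℝ) (hρ : 0 < ρ)
    (u : Fin n → ℝ) (v : Fin m → ℝ)
    (κ : Fin n → Fin m → ℝ)
    (hκdef : ∀ i j, κ i j = Real.exp ((u i + v j - C i j) / ρ) * (μ i * ν j))
    (hκ : IsCoupling κ μ ν)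
    (obj : (Fin n → Fin m → ℝ) → ℝ)
    (hobj : obj = fun κ' =>
      (∑ i, ∑ j, κ' i j * C i j) + ρ * ∑ i, ∑ j, κ' i j * Real.log (κ' i j / (μ i * ν j))) :
    (∀ κ', IsCoupling κ' μ ν → obj κ ≤ obj κ') ∧
    (∀ κ', IsCoupling κ' μ ν → obj κ' = obj κ → κ' = κ) ∧
    obj κ = (∑ i, u i * μ i) + (∑ j, v j * ν j) :=
  dual_optimal_coupling_general μ ν hμ0 hν0 C ρ hρ u v κ hκdef hκ obj hobj
end

section
/- The minimizer of the entropy-regularized transport problem min_{κ ∈ K(μ,ν)} ⟨κ,C⟩ − ρH(κ) (with μ, ν strictly positive) has the Sinkhorn form: there exist vectors a ∈ ℝ^n_{>0}, b ∈ ℝ^m_{>0} such that κ*_{ij} = a_i exp(−C_{ij}/ρ) b_j. -/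
/-- A strictly positive minimizer of the entropy-regularized transport problem has the
Sinkhorn scaling form `κ*_ij = a_i exp(−C_ij/ρ) b_j` with `a, b` strictly positive. -/
theorem minimizer_sinkhorn_form {n m : ℕ}
    (μ : Fin n → ℝ) (ν : Fin m → ℝ)
    (hμ0 : ∀ i, 0 < μ i) (hμ1 : ∑ i, μ i = 1)
    (hν0 : ∀ j, 0 < ν j) (hν1 : ∑ j, ν j = 1)
    (C : Fin n → Fin m → ℝ) (ρ : ℝ) (hρ : 0 < ρ)
    (κs : Fin n → Fin m → ℝ)
    (hκs : IsCoupling κs μ ν) (hκspos : ∀ i j, 0 < κs i j)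
    (hmin : ∀ κ, IsCoupling κ μ ν →
      (∑ i, ∑ j, κs i j * C i j) - ρ * (-(∑ i, ∑ j, κs i j * Real.log (κs i j)))
        ≤ (∑ i, ∑ j, κ i j * C i j) - ρ * (-(∑ i, ∑ j, κ i j * Real.log (κ i j)))) :
    ∃ a : Fin n → ℝ, ∃ b : Fin m → ℝ, (∀ i, 0 < a i) ∧ (∀ j, 0 < b j) ∧
      ∀ i j, κs i j = a i * Real.exp (-(C i j) / ρ) * b j := by
  -- nonempty index types
  have hn : Nonempty (Fin n) := by
    rcases isEmpty_or_nonempty (Fin n) with h | h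
    · rw [Finset.univ_eq_empty, Finset.sum_empty] at hμ1; norm_num at hμ1
    · exact h
  have hm : Nonempty (Fin m) := by
    rcases isEmpty_or_nonempty (Fin m) with h | h
    · rw [Finset.univ_eq_empty, Finset.sum_empty] at hν1; norm_num at hν1
    · exact h
  obtain ⟨i0⟩ := hn
  obtain ⟨j0⟩ := hm
  -- key cyclic identity
  have key : ∀ i i' j j',
      (C i j + ρ * Real.log (κs i j)) + (C i' j' + ρ * Real.log (κs i' j'))
        = (C i j' + ρ * Real.log (κs i j')) + (C i' j + ρ * Real.log (κs i' j)) := by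
    intro i i' j j'
    set d : Fin n → Fin m → ℝ := fun p q =>
      ((if p = i then (1:ℝ) else 0) - (if p = i' then 1 else 0)) *
      ((if q = j then (1:ℝ) else 0) - (if q = j' then 1 else 0)) with hd
    have habs : ∀ p q, |d p q| ≤ 1 := by
      intro p q
      rw [hd, abs_mul]
      have h1 : |(if p = i then (1:ℝ) else 0) - (if p = i' then 1 else 0)| ≤ 1 := by
        split_ifs <;> norm_num
      have h2 : |(if q = j then (1:ℝ) else 0) - (if q = j' then 1 else 0)| ≤ 1 := by
        split_ifs <;> norm_num
      calc |(if p = i then (1:ℝ) else 0) - (if p = i' then 1 else 0)| *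
            |(if q = j then (1:ℝ) else 0) - (if q = j' then 1 else 0)| ≤ 1 * 1 :=
        mul_le_mul h1 h2 (abs_nonneg _) zero_le_one
      _ = 1 := one_mul 1
    have hrowsum : ∀ p, ∑ q, d p q = 0 := by
      intro p
      rw [hd]
      simp [← Finset.mul_sum, Finset.sum_sub_distrib]
    have hcolsum : ∀ q, ∑ p, d p q = 0 := by
      intro q
      rw [hd]
      simp [← Finset.sum_mul, Finset.sum_sub_distrib]
    have hsum : ∀ X : Fin n → Fin m → ℝ,
        (∑ p, ∑ q, d p q * X p q) = X i j - X i j' - X i' j + X i' j' := by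
      intro X
      have h1 : ∀ p, ∑ q, d p q * X p q =
          ((if p = i then (1:ℝ) else 0) - (if p = i' then 1 else 0)) * (X p j - X p j') := by
        intro p
        rw [hd]
        simp only [mul_assoc, ← Finset.mul_sum]
        congr 1
        simp [sub_mul, ite_mul, Finset.sum_sub_distrib, Finset.sum_ite_eq']
      simp only [h1]
      have h2 : ∑ p, ((if p = i then (1:ℝ) else 0) - (if p = i' then 1 else 0)) * (X p j - X p j')
          = (X i j - X i j') - (X i' j - X i' j') := by
        simp [sub_mul, ite_mul, Finset.sum_sub_distrib, Finset.sum_ite_eq']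
      rw [h2]
      ring
    set g : ℝ → ℝ := fun t =>
      (∑ p, ∑ q, (κs p q + t * d p q) * C p q) -
        ρ * (-(∑ p, ∑ q, (κs p q + t * d p q) * Real.log (κs p q + t * d p q))) with hg
    -- derivative of g at 0
    have hDA : HasDerivAt (fun t => ∑ p, ∑ q, (κs p q + t * d p q) * C p q)
        (∑ p, ∑ q, d p q * C p q) 0 := by
      apply HasDerivAt.fun_sum
      intro p _
      apply HasDerivAt.fun_sum
      intro q _
      have h1 : HasDerivAt (fun t : ℝ => κs p q + t * d p q) (d p q) 0 := by
        simpa using ((hasDerivAt_id (0:ℝ)).mul_const (d p q)).const_add (κs p q)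
      simpa using h1.mul_const (C p q)
    have hDB : HasDerivAt
        (fun t => ∑ p, ∑ q, (κs p q + t * d p q) * Real.log (κs p q + t * d p q))
        (∑ p, ∑ q, (Real.log (κs p q) + 1) * d p q) 0 := by
      apply HasDerivAt.fun_sum
      intro p _
      apply HasDerivAt.fun_sum
      intro q _
      have h1 : HasDerivAt (fun t : ℝ => κs p q + t * d p q) (d p q) 0 := by
        simpa using ((hasDerivAt_id (0:ℝ)).mul_const (d p q)).const_add (κs p q)
      have h2 : HasDerivAt (fun x => x * Real.log x) (Real.log (κs p q) + 1)
          ((fun t : ℝ => κs p q + t * d p q) 0) := by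
        simpa using Real.hasDerivAt_mul_log (ne_of_gt (hκspos p q))
      have h3 := h2.comp 0 h1
      simpa [Function.comp_def] using h3
    have hDg : HasDerivAt g
        ((∑ p, ∑ q, d p q * C p q) - ρ * (-(∑ p, ∑ q, (Real.log (κs p q) + 1) * d p q))) 0 :=
      hDA.sub ((hDB.neg).const_mul ρ)
    -- local minimum at 0
    have hne : (Finset.univ ×ˢ Finset.univ : Finset (Fin n × Fin m)).Nonempty :=
      ⟨(i, j), by simp⟩
    set δ := (Finset.univ ×ˢ Finset.univ : Finset (Fin n × Fin m)).inf' hne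
      (fun p => κs p.1 p.2) with hδ
    have hδpos : 0 < δ := by
      rw [hδ, Finset.lt_inf'_iff]
      intro b _
      exact hκspos b.1 b.2
    have hδle : ∀ p q, δ ≤ κs p q := fun p q =>
      Finset.inf'_le _ (by simp : (p, q) ∈ Finset.univ ×ˢ Finset.univ)
    have hloc : IsLocalMin g 0 := by
      rw [IsLocalMin, IsMinFilter]
      rw [Metric.eventually_nhds_iff]
      refine ⟨δ, hδpos, fun t ht => ?_⟩
      rw [Real.dist_eq, sub_zero] at ht
      have hcoup : IsCoupling (fun p q => κs p q + t * d p q) μ ν := by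
        refine ⟨fun p q => ?_, fun p => ?_, fun q => ?_⟩
        · have : |t * d p q| ≤ |t| := by
            rw [abs_mul]
            calc |t| * |d p q| ≤ |t| * 1 := by
                  exact mul_le_mul_of_nonneg_left (habs p q) (abs_nonneg t)
            _ = |t| := mul_one _
          have h2 : -(t * d p q) ≤ |t| := (neg_le_abs _).trans this
          have h3 : |t| ≤ δ := le_of_lt ht
          show 0 ≤ κs p q + t * d p q
          linarith [hδle p q]
        · rw [Finset.sum_add_distrib, ← Finset.mul_sum, hrowsum p, mul_zero, add_zero]
          exact hκs.2.1 p
        · rw [Finset.sum_add_distrib, ← Finset.mul_sum, hcolsum q, mul_zero, add_zero]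
          exact hκs.2.2 q
      have h0 : g 0 = (∑ p, ∑ q, κs p q * C p q) -
          ρ * (-(∑ p, ∑ q, κs p q * Real.log (κs p q))) := by
        simp [hg]
      rw [h0]
      exact hmin _ hcoup
    have hzero := hloc.hasDerivAt_eq_zero hDg
    have hcomm : (∑ p, ∑ q, (Real.log (κs p q) + 1) * d p q)
        = ∑ p, ∑ q, d p q * (Real.log (κs p q) + 1) := by
      simp [mul_comm]
    rw [hcomm, hsum, hsum] at hzero
    linear_combination hzero
  -- construct a and b
  set f : Fin n → Fin m → ℝ := fun i j => C i j + ρ * Real.log (κs i j) with hf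
  refine ⟨fun i => Real.exp ((f i j0 - f i0 j0) / ρ),
    fun j => Real.exp (f i0 j / ρ), fun i => Real.exp_pos _, fun j => Real.exp_pos _, ?_⟩
  intro i j
  have hfij : f i j = (f i j0 - f i0 j0) + f i0 j := by
    have := key i i0 j j0
    simp only [hf] at *
    linarith
  rw [← Real.exp_log (hκspos i j), ← Real.exp_add, ← Real.exp_add]
  congr 1
  have hlog : Real.log (κs i j) = (f i j - C i j) / ρ := by
    rw [hf]
    field_simp
    ring
  rw [hlog, hfij]
  field_simp
  ring
end
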